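/- arXiv:0804.1078 — 2 statements merged into one kernel-verified Lean document; each statement's English description precedes it below -/
import Mathlib

section
/- Let k be a field with char k ∉ {2, 5} and let θ, θ' be the roots of t² - 11t - 1 in an algebraic closure of k. If θ/θ' is a primitive 6th root of unity (i.e. (θ/θ')² - (θ/θ') + 1 = 0), then char k = 31. -/
/-- Let `θ, θ'` be the roots of `t² - 11t - 1` (so `θ + θ' = 11`, `θθ' = -1`) in an
algebraically closed field of characteristic `∉ {2, 5}`. If `θ/θ'` is a primitive 6th
root of unity, i.e. `(θ/θ')² - (θ/θ') + 1 = 0`, then the characteristic is 31. -/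
theorem ratio_sixth_root_char31 {K : Type*} [Field K] [IsAlgClosed K]
    (h2 : ringChar K ≠ 2) (h5 : ringChar K ≠ 5)
    (θ θ' : K) (hsum : θ + θ' = 11) (hprod : θ * θ' = -1)
    (hroot : (θ / θ') ^ 2 - θ / θ' + 1 = 0) :
    ringChar K = 31 := by
  have hθ' : θ' ≠ 0 := by
    intro h
    rw [h, mul_zero] at hprod
    simp at hprod
  have hfac : θ' * (θ ^ 2 - θ * θ' + θ' ^ 2) = 0 := by
    field_simp at hroot
    linear_combination θ' * hroot
  have hcl : θ ^ 2 - θ * θ' + θ' ^ 2 = 0 := (mul_eq_zero.mp hfac).resolve_left hθ'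
  have h124 : (124 : K) = 0 := by
    linear_combination hcl - (θ + θ' + 11) * hsum + 3 * hprod
  have hdvd : ringChar K ∣ 124 := (ringChar.spec K 124).mp (by exact_mod_cast h124)
  have hne : ringChar K ≠ 0 := by
    intro h; rw [h] at hdvd; norm_num at hdvd
  have hp : (ringChar K).Prime := CharP.char_prime_of_ne_zero K hne
  have h2le := hp.two_le
  have hle : ringChar K ≤ 124 := Nat.le_of_dvd (by norm_num) hdvd
  interval_cases h : ringChar K <;>
    first
      | rfl
      | (exact absurd rfl h2)
      | (exact absurd h h2)
      | (exact absurd hp (by decide))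
      | (revert hdvd; decide)
end

section
/- Let p be a prime with p ∉ {2, 3, 5}. With κ = (11 + 5√5)/(11 - 5√5) in characteristic p, κ = -8 or κ = -1/8 holds if and only if p = 919. -/
/-- In an algebraically closed field of prime characteristic `p ∉ {2, 3, 5}`, with `√5` a
square root of `5` and `κ = (11 + 5√5)/(11 - 5√5)`, one has `κ = -8` or `κ = -1/8`
if and only if `p = 919`. -/
theorem kappa_minusEight_iff {K : Type*} [Field K] [IsAlgClosed K]
    (hp : (ringChar K).Prime) (h2 : ringChar K ≠ 2) (h3 : ringChar K ≠ 3)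
    (h5 : ringChar K ≠ 5) (s : K) (hs : s ^ 2 = 5) :
    ((11 + 5 * s) / (11 - 5 * s) = -8 ∨ (11 + 5 * s) / (11 - 5 * s) = -(8⁻¹)) ↔
      ringChar K = 919 := by
  have hchar := ringChar.charP K
  have hden : (11 : K) - 5 * s ≠ 0 := by
    intro hd
    have h4 : ((4 : ℕ) : K) = 0 := by
      push_cast
      linear_combination (-(5 * s + 11)) * hd - 25 * hs
    have hdvd : ringChar K ∣ 4 := (CharP.cast_eq_zero_iff K (ringChar K) 4).mp h4
    have hdvd2 : ringChar K ∣ 2 := hp.dvd_of_dvd_pow (n := 2) (by norm_num at hdvd ⊢; exact hdvd)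
    exact h2 ((Nat.prime_dvd_prime_iff_eq hp Nat.prime_two).mp hdvd2)
  have h8 : (8 : K) ≠ 0 := by
    intro hd
    have h8' : ((8 : ℕ) : K) = 0 := by push_cast; exact hd
    have hdvd : ringChar K ∣ 8 := (CharP.cast_eq_zero_iff K (ringChar K) 8).mp h8'
    have hdvd2 : ringChar K ∣ 2 := hp.dvd_of_dvd_pow (n := 3) (by norm_num at hdvd ⊢; exact hdvd)
    exact h2 ((Nat.prime_dvd_prime_iff_eq hp Nat.prime_two).mp hdvd2)
  have key : ∀ h1 : (35 : K) * s = 99 ∨ (35 : K) * s = -99, ringChar K = 919 := by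
    intro h1
    have h0 : ((3676 : ℕ) : K) = 0 := by
      push_cast
      rcases h1 with h1 | h1
      · linear_combination (-(35 * s + 99)) * h1 + 1225 * hs
      · linear_combination (-(35 * s - 99)) * h1 + 1225 * hs
    have hdvd : ringChar K ∣ 3676 := (CharP.cast_eq_zero_iff K (ringChar K) 3676).mp h0
    have h919 : (3676 : ℕ) = 2 ^ 2 * 919 := by norm_num
    rw [h919] at hdvd
    rcases (Nat.Prime.dvd_mul hp).mp hdvd with h' | h'
    · exact absurd ((Nat.prime_dvd_prime_iff_eq hp Nat.prime_two).mp (hp.dvd_of_dvd_pow h')) h2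
    · exact (Nat.prime_dvd_prime_iff_eq hp (by norm_num)).mp h'
  constructor
  · rintro (h | h)
    · rw [div_eq_iff hden] at h
      exact key (Or.inl (by linear_combination -h))
    · rw [div_eq_iff hden] at h
      refine key (Or.inr ?_)
      have h' : (8 : K) * (11 + 5 * s) = -(11 - 5 * s) := by
        field_simp at h
        linear_combination h
      linear_combination h'
  · intro h919
    have h0 : ((3676 : ℕ) : K) = 0 :=
      (CharP.cast_eq_zero_iff K (ringChar K) 3676).mpr (by rw [h919]; norm_num)
    push_cast at h0
    have hfac : ((99 : K) - 35 * s) * (99 + 35 * s) = 0 := by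
      linear_combination h0 - 1225 * hs
    rcases mul_eq_zero.mp hfac with ha | hb
    · left
      rw [div_eq_iff hden]
      linear_combination ha
    · right
      rw [div_eq_iff hden]
      rw [neg_mul, eq_comm, neg_eq_iff_eq_neg, inv_mul_eq_div, div_eq_iff h8, eq_comm]
      linear_combination -hb
end
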